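/- arXiv:1301.0444 — 7 statements merged into one kernel-verified Lean document; each statement's English description precedes it below -/
import Mathlib

section
/- Let E be a real inner product space and let a : [0,∞) → ℝ be monotone nondecreasing with a(0) = 0. Define A : E → E by A(w) = (a(‖w‖)/‖w‖)·w for w ≠ 0 and A(0) = 0. Then for all u, v ∈ E one has ⟨A(u) − A(v), u − v⟩ ≥ (a(‖u‖) − a(‖v‖))·(‖u‖ − ‖v‖) ≥ 0. -/
/-!
Writing `A w = α • w` with `α = a ‖w‖ / ‖w‖ ≥ 0`, the inner product `⟪α • u - β • v, u - v⟫`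
expands to `α ‖u‖² + β ‖v‖² - (α + β) ⟪u, v⟫`, and Cauchy–Schwarz bounds this from below by
`(α ‖u‖ - β ‖v‖) (‖u‖ - ‖v‖) = (a ‖u‖ - a ‖v‖) (‖u‖ - ‖v‖)`, which is nonnegative because `a`
is monotone.
-/

open RealInnerProductSpace

theorem mul_norm_sub_mul_norm_mul_le_inner_smul_sub_smul {E : Type*} [NormedAddCommGroup E]
    [InnerProductSpace ℝ E] {α β : ℝ} (hα : 0 ≤ α) (hβ : 0 ≤ β) (u v : E) :
    (α * ‖u‖ - β * ‖v‖) * (‖u‖ - ‖v‖) ≤ ⟪α • u - β • v, u - v⟫ := by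
  have hexpand : ⟪α • u - β • v, u - v⟫ = α * ‖u‖ ^ 2 + β * ‖v‖ ^ 2 - (α + β) * ⟪u, v⟫ := by
    simp only [inner_sub_left, inner_sub_right, real_inner_smul_left, real_inner_self_eq_norm_sq,
      real_inner_comm u v]
    ring
  have hcs : (α + β) * ⟪u, v⟫ ≤ (α + β) * (‖u‖ * ‖v‖) :=
    mul_le_mul_of_nonneg_left (real_inner_le_norm u v) (add_nonneg hα hβ)
  rw [hexpand]
  linarith

/-- Monotonicity inequality for the vector field `w ↦ (a ‖w‖ / ‖w‖) • w` underlying the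
operator `Q[u] = div((a(|∇u|)/|∇u|)∇u)`. -/
theorem stmt_0 {E : Type*} [NormedAddCommGroup E] [InnerProductSpace ℝ E]
    (a : ℝ → ℝ) (ha_mono : MonotoneOn a (Set.Ici 0)) (ha0 : a 0 = 0)
    (A : E → E) (hA0 : A 0 = 0)
    (hA : ∀ w : E, w ≠ 0 → A w = (a ‖w‖ / ‖w‖) • w)
    (u v : E) :
    (a ‖u‖ - a ‖v‖) * (‖u‖ - ‖v‖) ≤ (inner ℝ (A u - A v) (u - v) : ℝ) ∧
      0 ≤ (a ‖u‖ - a ‖v‖) * (‖u‖ - ‖v‖) := by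
  have hA' (w : E) : A w = (a ‖w‖ / ‖w‖) • w := by
    rcases eq_or_ne w 0 with rfl | hw
    · simp [hA0]
    · exact hA w hw
  have hcoeff_nonneg (w : E) : 0 ≤ a ‖w‖ / ‖w‖ :=
    div_nonneg (ha0 ▸ ha_mono Set.self_mem_Ici (norm_nonneg w) (norm_nonneg w)) (norm_nonneg w)
  have hcoeff_mul (w : E) : a ‖w‖ / ‖w‖ * ‖w‖ = a ‖w‖ :=
    div_mul_cancel_of_imp fun hw ↦ by rw [hw, ha0]
  refine ⟨?_, (ha_mono.monovaryOn monotoneOn_id).sub_mul_sub_nonneg (norm_nonneg v) (norm_nonneg u)⟩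
  have h := mul_norm_sub_mul_norm_mul_le_inner_smul_sub_smul (hcoeff_nonneg u) (hcoeff_nonneg v) u v
  rwa [hcoeff_mul, hcoeff_mul, ← hA', ← hA'] at h
end

section
/- Let E be a real inner product space and let a : [0,∞) → ℝ be strictly increasing with a(0) = 0. Define A : E → E by A(w) = (a(‖w‖)/‖w‖)·w for w ≠ 0 and A(0) = 0. If u, v ∈ E satisfy ⟨A(u) − A(v), u − v⟩ = 0, then u = v. -/
open Set InnerProductSpace

section RadialField

variable {E : Type*} [NormedAddCommGroup E] [InnerProductSpace ℝ E]

/-- By Cauchy–Schwarz applied to the cross term `(c + d) ⟪u, v⟫`. -/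
theorem mul_sub_norm_le_inner_smul_sub_smul {c d : ℝ} (hc : 0 ≤ c) (hd : 0 ≤ d) (u v : E) :
    (c * ‖u‖ - d * ‖v‖) * (‖u‖ - ‖v‖) ≤ ⟪c • u - d • v, u - v⟫_ℝ := by
  have hcs : (c + d) * ⟪u, v⟫_ℝ ≤ (c + d) * (‖u‖ * ‖v‖) :=
    mul_le_mul_of_nonneg_left (real_inner_le_norm u v) (add_nonneg hc hd)
  have hexpand : ⟪c • u - d • v, u - v⟫_ℝ = c * ‖u‖ ^ 2 + d * ‖v‖ ^ 2 - (c + d) * ⟪u, v⟫_ℝ := by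
    simp only [inner_sub_left, inner_sub_right, real_inner_smul_left,
      real_inner_self_eq_norm_sq, real_inner_comm u v]
    ring
  rw [hexpand]
  nlinarith

/-- The junk value `x / 0 = 0` makes this vanish at `0`, with no case split. -/
noncomputable def radialField (a : ℝ → ℝ) (w : E) : E := (a ‖w‖ / ‖w‖) • w

variable {a : ℝ → ℝ}

theorem eq_radialField {A : E → E} (hA0 : A 0 = 0)
    (hA : ∀ w : E, w ≠ 0 → A w = (a ‖w‖ / ‖w‖) • w) : A = radialField a := by
  funext w
  rcases eq_or_ne w 0 with rfl | hw
  · simp [hA0, radialField]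
  · exact hA w hw

theorem sub_mul_sub_norm_le_inner_radialField (ha0 : a 0 = 0) (ha : ∀ t, 0 ≤ t → 0 ≤ a t)
    (u v : E) :
    (a ‖u‖ - a ‖v‖) * (‖u‖ - ‖v‖) ≤ ⟪radialField a u - radialField a v, u - v⟫_ℝ := by
  have hcoef : ∀ w : E, 0 ≤ a ‖w‖ / ‖w‖ := fun w =>
    div_nonneg (ha _ (norm_nonneg w)) (norm_nonneg w)
  have hcancel : ∀ w : E, a ‖w‖ / ‖w‖ * ‖w‖ = a ‖w‖ := fun w =>
    div_mul_cancel_of_imp fun hw => hw ▸ ha0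
  simpa only [radialField, hcancel] using
    mul_sub_norm_le_inner_smul_sub_smul (hcoef u) (hcoef v) u v

theorem norm_eq_of_inner_radialField_sub_eq_zero (ha : StrictMonoOn a (Ici 0)) (ha0 : a 0 = 0)
    {u v : E} (h : ⟪radialField a u - radialField a v, u - v⟫_ℝ = 0) : ‖u‖ = ‖v‖ := by
  have hnonneg : ∀ t, 0 ≤ t → 0 ≤ a t := fun t ht =>
    ha0 ▸ ha.monotoneOn (mem_Ici.2 le_rfl) (mem_Ici.2 ht) ht
  have hle := h ▸ sub_mul_sub_norm_le_inner_radialField ha0 hnonneg u v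
  by_contra hne
  rcases lt_or_gt_of_ne hne with hlt | hgt
  · have := ha (mem_Ici.2 (norm_nonneg u)) (mem_Ici.2 (norm_nonneg v)) hlt
    nlinarith
  · have := ha (mem_Ici.2 (norm_nonneg v)) (mem_Ici.2 (norm_nonneg u)) hgt
    nlinarith

/-- Once `‖u‖ = ‖v‖`, the pairing is `(a ‖u‖ / ‖u‖) ‖u - v‖²` with a positive coefficient. -/
theorem eq_of_inner_radialField_sub_eq_zero (ha : StrictMonoOn a (Ici 0)) (ha0 : a 0 = 0)
    {u v : E} (h : ⟪radialField a u - radialField a v, u - v⟫_ℝ = 0) : u = v := by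
  have hnorm := norm_eq_of_inner_radialField_sub_eq_zero ha ha0 h
  rcases eq_or_ne u 0 with rfl | hu
  · exact (norm_eq_zero.1 (hnorm.symm.trans norm_zero)).symm
  have hpos : 0 < ‖u‖ := norm_pos_iff.2 hu
  have hcoef : 0 < a ‖u‖ / ‖u‖ :=
    div_pos (ha0 ▸ ha (mem_Ici.2 le_rfl) (mem_Ici.2 hpos.le) hpos) hpos
  rw [radialField, radialField, ← hnorm, ← smul_sub, real_inner_smul_left,
    real_inner_self_eq_norm_sq] at h
  have hsq : ‖u - v‖ ^ 2 = 0 := (mul_eq_zero.1 h).resolve_left hcoef.ne'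
  exact sub_eq_zero.1 (norm_eq_zero.1 (pow_eq_zero_iff two_ne_zero |>.1 hsq))

end RadialField

/-- Strict monotonicity of the vector field `w ↦ (a ‖w‖ / ‖w‖) • w` underlying the
operator `Q[u] = div((a(|∇u|)/|∇u|)∇u)`. -/
theorem stmt_1 {E : Type*} [NormedAddCommGroup E] [InnerProductSpace ℝ E]
    (a : ℝ → ℝ) (ha_mono : StrictMonoOn a (Set.Ici 0)) (ha0 : a 0 = 0)
    (A : E → E) (hA0 : A 0 = 0)
    (hA : ∀ w : E, w ≠ 0 → A w = (a ‖w‖ / ‖w‖) • w)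
    (u v : E) (h : (inner ℝ (A u - A v) (u - v) : ℝ) = 0) :
    u = v := by
  rw [eq_radialField hA0 hA] at h
  exact eq_of_inner_radialField_sub_eq_zero ha_mono ha0 h
end

section
/- Let a : [0,∞) → [0,∞) be continuous and strictly increasing with a(0) = 0, and suppose there exist q > 0 and δ > 0 such that a(s) ≥ s^q for all s ∈ [0, δ]. Let k > 0, let n ≥ 2 be an integer, and let c = a(s₀) for some s₀ > 0. Then the function t ↦ a⁻¹(c · cosh(kt)^{1−n}) is Lebesgue integrable on [0, ∞), where a⁻¹ denotes the inverse function of a defined on the range of a. -/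
/-!
Since `cosh x ≥ eˣ / 2`, the argument `v t = c · cosh(kt)^(1-n)` of `a⁻¹` decays like
`e^{-k(n-1)t}`; once it is below `a δ`, hypothesis (a3) inverts to `a⁻¹ y ≤ y^(1/q)`, so the
integrand is `O(e^{-k(n-1)t/q})`. It is also antitone, as `a⁻¹` is monotone on `[0, c]` and `v`
is antitone, hence locally integrable; exponential decay then gives integrability on `[0, ∞)`.
-/

open MeasureTheory Real Set Filter Asymptotics Topology

theorem AntitoneOn.integrableOn_Ici_of_isBigO_exp_neg {f : ℝ → ℝ} {a r : ℝ} (hr : 0 < r)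
    (hf : AntitoneOn f (Ici a)) (ho : f =O[atTop] fun x => exp (-r * x)) :
    IntegrableOn f (Ici a) := by
  refine LocallyIntegrableOn.integrableOn_of_isBigO_atTop ?_ ho
    ⟨Ioi r, Ioi_mem_atTop r, exp_neg_integrableOn_Ioi r hr⟩
  rw [locallyIntegrableOn_iff isClosed_Ici.isLocallyClosed]
  exact fun K hK hKc => (hf.mono hK).integrableOn_isCompact hKc

theorem Real.cosh_rpow_le_two_rpow_mul_exp (x : ℝ) {p : ℝ} (hp : p ≤ 0) :
    cosh x ^ p ≤ 2 ^ (-p) * exp (p * x) := by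
  have h : exp x / 2 ≤ cosh x := by rw [cosh_eq]; linarith [exp_pos (-x)]
  calc cosh x ^ p ≤ (exp x / 2) ^ p := rpow_le_rpow_of_nonpos (by positivity) h hp
    _ = 2 ^ (-p) * exp (p * x) := by
      rw [div_rpow (exp_pos x).le zero_le_two, ← exp_mul, rpow_neg zero_le_two, mul_comm x,
        div_eq_inv_mul]

theorem Real.antitoneOn_cosh_mul_rpow {k p : ℝ} (hk : 0 ≤ k) (hp : p ≤ 0) :
    AntitoneOn (fun t => cosh (k * t) ^ p) (Ici 0) := fun _ hs _ ht hst =>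
  rpow_le_rpow_of_nonpos (cosh_pos _)
    (cosh_strictMonoOn.monotoneOn (mul_nonneg hk hs) (mul_nonneg hk ht)
      (mul_le_mul_of_nonneg_left hst hk)) hp

theorem Real.isBigO_cosh_mul_rpow (k : ℝ) {p : ℝ} (hp : p ≤ 0) :
    (fun t => cosh (k * t) ^ p) =O[atTop] fun t => exp (p * k * t) := by
  refine IsBigO.of_bound (2 ^ (-p)) (Eventually.of_forall fun t => ?_)
  rw [norm_of_nonneg (rpow_nonneg (cosh_pos _).le _), norm_of_nonneg (exp_pos _).le, mul_assoc]
  exact cosh_rpow_le_two_rpow_mul_exp _ hp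

namespace Set.LeftInvOn

variable {a b : ℝ → ℝ} {s₀ y : ℝ}

theorem mem_Icc_and_apply_apply_eq (hb : LeftInvOn b a (Ici 0))
    (ha_cont : ContinuousOn a (Ici 0)) (ha0 : a 0 = 0) (hs₀ : 0 ≤ s₀)
    (hy : y ∈ Icc 0 (a s₀)) : b y ∈ Icc 0 s₀ ∧ a (b y) = y := by
  obtain ⟨s, hs, rfl⟩ :=
    intermediate_value_Icc hs₀ (ha_cont.mono Icc_subset_Ici_self) (ha0 ▸ hy)
  rw [hb hs.1]
  exact ⟨hs, rfl⟩

theorem monotoneOn_Icc (hb : LeftInvOn b a (Ici 0)) (ha_cont : ContinuousOn a (Ici 0))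
    (ha_mono : StrictMonoOn a (Ici 0)) (ha0 : a 0 = 0) (hs₀ : 0 ≤ s₀) :
    MonotoneOn b (Icc 0 (a s₀)) := by
  intro y₁ hy₁ y₂ hy₂ h
  obtain ⟨hb₁, hab₁⟩ := hb.mem_Icc_and_apply_apply_eq ha_cont ha0 hs₀ hy₁
  obtain ⟨hb₂, hab₂⟩ := hb.mem_Icc_and_apply_apply_eq ha_cont ha0 hs₀ hy₂
  exact (ha_mono.le_iff_le hb₁.1 hb₂.1).mp (by rwa [hab₁, hab₂])

theorem le_rpow_inv {q δ : ℝ} (hb : LeftInvOn b a (Ici 0)) (ha_cont : ContinuousOn a (Ici 0))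
    (ha_mono : StrictMonoOn a (Ici 0)) (ha0 : a 0 = 0) (hq : 0 < q) (hδ : 0 ≤ δ)
    (ha : ∀ s ∈ Icc 0 δ, s ^ q ≤ a s) (hs₀ : 0 ≤ s₀) (hy : y ∈ Icc 0 (a s₀)) (hyδ : y ≤ a δ) :
    b y ≤ y ^ q⁻¹ := by
  obtain ⟨hby, haby⟩ := hb.mem_Icc_and_apply_apply_eq ha_cont ha0 hs₀ hy
  have hbδ : b y ≤ δ := (ha_mono.le_iff_le hby.1 hδ).mp (by rwa [haby])
  exact (le_rpow_inv_iff_of_pos hby.1 hy.1 hq).mpr ((ha _ ⟨hby.1, hbδ⟩).trans_eq haby)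

theorem isBigO_comp_rpow_inv {α : Type*} {l : Filter α} {v : α → ℝ} {q δ : ℝ}
    (hb : LeftInvOn b a (Ici 0)) (ha_cont : ContinuousOn a (Ici 0))
    (ha_mono : StrictMonoOn a (Ici 0)) (ha0 : a 0 = 0) (hq : 0 < q) (hδ : 0 < δ)
    (ha : ∀ s ∈ Icc 0 δ, s ^ q ≤ a s) (hs₀ : 0 ≤ s₀) (hv : ∀ x, v x ∈ Icc 0 (a s₀))
    (hv0 : Tendsto v l (𝓝 0)) : (b ∘ v) =O[l] fun x => v x ^ q⁻¹ := by
  have haδ : 0 < a δ := ha0 ▸ ha_mono self_mem_Ici hδ.le hδ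
  refine IsBigO.of_bound' ((hv0.eventually (ge_mem_nhds haδ)).mono fun x hx => ?_)
  have hbv := (hb.mem_Icc_and_apply_apply_eq ha_cont ha0 hs₀ (hv x)).1.1
  rw [Function.comp_apply, norm_of_nonneg hbv, norm_of_nonneg (rpow_nonneg (hv x).1 _)]
  exact hb.le_rpow_inv ha_cont ha_mono ha0 hq hδ.le ha hs₀ (hv x) hx

end Set.LeftInvOn

theorem stmt_3_general (a : ℝ → ℝ)
    (ha_cont : ContinuousOn a (Set.Ici 0))
    (ha_mono : StrictMonoOn a (Set.Ici 0))
    (ha0 : a 0 = 0)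
    (q δ : ℝ) (hq : 0 < q) (hδ : 0 < δ)
    (ha3 : ∀ s ∈ Set.Icc (0 : ℝ) δ, s ^ q ≤ a s)
    (k : ℝ) (hk : 0 < k) (n : ℕ) (hn : 2 ≤ n)
    (s₀ c : ℝ) (hs₀ : 0 < s₀) (hc : c = a s₀)
    (b : ℝ → ℝ) (hb : ∀ s : ℝ, 0 ≤ s → b (a s) = s) :
    MeasureTheory.IntegrableOn
      (fun t : ℝ => b (c * Real.cosh (k * t) ^ (1 - (n : ℤ)))) (Set.Ici 0) := by
  replace hb : LeftInvOn b a (Ici 0) := fun s hs => hb s hs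
  set p : ℝ := 1 - n
  have hp : p < 0 := by
    have : (2 : ℝ) ≤ n := by exact_mod_cast hn
    linarith
  have hpk : p * k < 0 := mul_neg_of_neg_of_pos hp hk
  have hc0 : 0 < c := hc ▸ ha0 ▸ ha_mono self_mem_Ici hs₀.le hs₀
  set v : ℝ → ℝ := fun t => c * cosh (k * t) ^ p
  have hv : ∀ t, v t ∈ Icc 0 (a s₀) := fun t =>
    ⟨by positivity, hc ▸ mul_le_of_le_one_right hc0.le
      (rpow_le_one_of_one_le_of_nonpos (one_le_cosh _) hp.le)⟩
  have hv_exp : v =O[atTop] fun t => exp (p * k * t) :=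
    (isBigO_cosh_mul_rpow k hp.le).const_mul_left c
  have hv0 : Tendsto v atTop (𝓝 0) :=
    hv_exp.trans_tendsto (tendsto_exp_atBot.comp (tendsto_id.const_mul_atTop_of_neg hpk))
  have hf : (fun t => b (c * cosh (k * t) ^ (1 - (n : ℤ)))) = b ∘ v := by
    ext t; simp [v, p, ← rpow_intCast]
  rw [hf]
  refine AntitoneOn.integrableOn_Ici_of_isBigO_exp_neg (r := -(p * k) / q)
    (div_pos (neg_pos.2 hpk) hq) ?_ ?_
  · exact fun s hs t ht hst => hb.monotoneOn_Icc ha_cont ha_mono ha0 hs₀.le (hv t) (hv s)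
      (mul_le_mul_of_nonneg_left (antitoneOn_cosh_mul_rpow hk.le hp.le hs ht hst) hc0.le)
  · calc (b ∘ v) =O[atTop] fun t => v t ^ q⁻¹ :=
          hb.isBigO_comp_rpow_inv ha_cont ha_mono ha0 hq hδ ha3 hs₀.le hv hv0
      _ =O[atTop] fun t => exp (p * k * t) ^ q⁻¹ :=
        hv_exp.rpow (inv_nonneg.2 hq.le) (Eventually.of_forall fun t => (exp_pos _).le)
      _ = fun t => exp (-(-(p * k) / q) * t) := by
        ext t; rw [← exp_mul]; congr 1; field_simp

/-- Integrability of `t ↦ a⁻¹ (c · cosh(kt)^(1-n))` on `[0,∞)`, where `a⁻¹`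
(here called `b`) is the inverse of the continuous strictly increasing function
`a : [0,∞) → [0,∞)` with `a 0 = 0` and `a s ≥ s ^ q` on `[0, δ]`, and `c = a s₀`. -/
theorem stmt_3 (a : ℝ → ℝ)
    (ha_cont : ContinuousOn a (Set.Ici 0))
    (ha_mono : StrictMonoOn a (Set.Ici 0))
    (ha0 : a 0 = 0)
    (ha_nonneg : ∀ s : ℝ, 0 ≤ s → 0 ≤ a s)
    (q δ : ℝ) (hq : 0 < q) (hδ : 0 < δ)
    (ha3 : ∀ s ∈ Set.Icc (0 : ℝ) δ, s ^ q ≤ a s)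
    (k : ℝ) (hk : 0 < k) (n : ℕ) (hn : 2 ≤ n)
    (s₀ c : ℝ) (hs₀ : 0 < s₀) (hc : c = a s₀)
    (b : ℝ → ℝ) (hb : ∀ s : ℝ, 0 ≤ s → b (a s) = s) :
    MeasureTheory.IntegrableOn
      (fun t : ℝ => b (c * Real.cosh (k * t) ^ (1 - (n : ℤ)))) (Set.Ici 0) :=
  stmt_3_general a ha_cont ha_mono ha0 q δ hq hδ ha3 k hk n hn s₀ c hs₀ hc b hb
end

section
/- Let k > 0 and R > 0, and let r, θ : ℝ → ℝ be differentiable functions with r(t) > 0 for all t, satisfying the system r′(t) = cosh(kR)·sin(θ(t)), θ′(t) = k·sinh(kR)/sinh(k·r(t))², with initial conditions r(0) = R and θ(0) = 0. Then cos(θ(t)) = tanh(kR)·(cosh(k·r(t))/sinh(k·r(t))) for all t ∈ ℝ. -/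
/-! Along the system, `d/dt coth (k r) = -k cosh (kR) sin θ / sinh² (k r)`, so `tanh (kR) coth (k r)`
and `cos θ` have the same derivative; both equal `1` at `t = 0`. -/

open Real

lemma Real.sinh_ne_zero_of_ne_zero {x : ℝ} (hx : x ≠ 0) : sinh x ≠ 0 := by
  simpa using sinh_injective.ne hx

lemma HasDerivAt.coth {u : ℝ → ℝ} {u' t : ℝ} (hu : HasDerivAt u u' t) (ht : u t ≠ 0) :
    HasDerivAt (fun s => Real.cosh (u s) / Real.sinh (u s)) (-u' / Real.sinh (u t) ^ 2) t := by
  refine (hu.cosh.div hu.sinh (sinh_ne_zero_of_ne_zero ht)).congr_deriv ?_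
  congr 1
  linear_combination (-u') * cosh_sq (u t)

lemma hasDerivAt_cos_sub_mul_coth_eq_zero {r θ : ℝ → ℝ} {a c k t : ℝ}
    (hr : HasDerivAt r (a * sin (θ t)) t)
    (hθ : HasDerivAt θ (k * a * c / sinh (k * r t) ^ 2) t) (hkr : k * r t ≠ 0) :
    HasDerivAt (fun s => cos (θ s) - c * (cosh (k * r s) / sinh (k * r s))) 0 t := by
  refine (hθ.cos.sub ((HasDerivAt.coth (hr.const_mul k) hkr).const_mul c)).congr_deriv ?_
  ring

/-- The conserved quantity `cos θ(t) = tanh(kR) · coth(k r(t))` for the ODE system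
defining the hypersurface `S_R` in a rotationally symmetric Hadamard manifold. -/
theorem stmt_4 (k R : ℝ) (hk : 0 < k) (hR : 0 < R)
    (r θ : ℝ → ℝ) (hr : Differentiable ℝ r) (hθ : Differentiable ℝ θ)
    (hrpos : ∀ t : ℝ, 0 < r t)
    (hr' : ∀ t : ℝ, deriv r t = Real.cosh (k * R) * Real.sin (θ t))
    (hθ' : ∀ t : ℝ, deriv θ t = k * Real.sinh (k * R) / (Real.sinh (k * r t)) ^ 2)
    (hr0 : r 0 = R) (hθ0 : θ 0 = 0) :
    ∀ t : ℝ, Real.cos (θ t)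
      = Real.tanh (k * R) * (Real.cosh (k * r t) / Real.sinh (k * r t)) := by
  have hcoeff : k * cosh (k * R) * tanh (k * R) = k * sinh (k * R) := by
    rw [tanh_eq_sinh_div_cosh]
    field_simp
  have hfirst : ∀ t, HasDerivAt
      (fun s => cos (θ s) - tanh (k * R) * (cosh (k * r s) / sinh (k * r s))) 0 t := by
    intro t
    refine hasDerivAt_cos_sub_mul_coth_eq_zero (a := cosh (k * R)) ?_ ?_
      (mul_pos hk (hrpos t)).ne'
    · simpa [hr' t] using (hr t).hasDerivAt
    · simpa [hθ' t, hcoeff] using (hθ t).hasDerivAt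
  have hinit : cos (θ 0) - tanh (k * R) * (cosh (k * r 0) / sinh (k * r 0)) = 0 := by
    have hsinh : sinh (k * R) ≠ 0 := sinh_ne_zero_of_ne_zero (mul_pos hk hR).ne'
    rw [hθ0, hr0, tanh_eq_sinh_div_cosh, cos_zero]
    field_simp
    simp
  intro t
  rw [← sub_eq_zero, ← hinit]
  exact is_const_of_deriv_eq_zero (fun s => (hfirst s).differentiableAt)
    (fun s => (hfirst s).deriv) t 0
end

section
/- Let k > 0 and let f : [0,∞) → ℝ be twice differentiable with f(0) = 0, f′(0) = 1, f(r) > 0 for all r > 0, and f″(r) ≥ k²·f(r) for all r ≥ 0. Then f′(r) ≥ cosh(kr) for all r ≥ 0. -/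
/-!
With `w r = f r - sinh (k r) / k` the claim is `w' ≥ 0`, where `w 0 = w' 0 = 0` and
`w'' ≥ k² w`. Factor `w'' - k² w = (D - k)(D + k) w`: with `P = w' + k w`, the integrating
factors `e^{-kr}` and `e^{kr}` show in turn `P ≥ 0` and `w ≥ 0`, and then `w'' ≥ k² w ≥ 0`
gives `w' ≥ 0`.
-/

open Real Set

lemma nonneg_of_hasDerivAt_nonneg {g g' : ℝ → ℝ}
    (hg : ∀ x, 0 ≤ x → HasDerivAt g (g' x) x) (h0 : g 0 = 0)
    (hg' : ∀ x, 0 ≤ x → 0 ≤ g' x) {x : ℝ} (hx : 0 ≤ x) : 0 ≤ g x := by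
  have hmono : MonotoneOn g (Ici 0) := by
    refine monotoneOn_of_hasDerivWithinAt_nonneg (f' := g') (convex_Ici 0)
      (fun y hy => (hg y hy).continuousAt.continuousWithinAt) (fun y hy => ?_) (fun y hy => ?_)
    all_goals rw [interior_Ici] at hy
    · exact (hg y (le_of_lt hy)).hasDerivWithinAt
    · exact hg' y (le_of_lt hy)
  simpa [h0] using hmono self_mem_Ici hx hx

lemma nonneg_of_deriv_add_mul_nonneg {h h' : ℝ → ℝ} (c : ℝ)
    (hh : ∀ x, 0 ≤ x → HasDerivAt h (h' x) x) (h0 : h 0 = 0)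
    (hc : ∀ x, 0 ≤ x → 0 ≤ h' x + c * h x) {x : ℝ} (hx : 0 ≤ x) : 0 ≤ h x := by
  have hderiv : ∀ y, 0 ≤ y →
      HasDerivAt (fun y => h y * exp (c * y)) ((h' y + c * h y) * exp (c * y)) y :=
    fun y hy => ((hh y hy).mul (hasDerivAt_const_mul c).exp).congr_deriv (by ring)
  have := nonneg_of_hasDerivAt_nonneg hderiv (by simp [h0])
    (fun y hy => mul_nonneg (hc y hy) (exp_pos _).le) hx
  exact nonneg_of_mul_nonneg_left this (exp_pos _)

section SecondOrder

variable {g g' g'' : ℝ → ℝ} {k : ℝ}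
  (hg : ∀ x, 0 ≤ x → HasDerivAt g (g' x) x) (hg' : ∀ x, 0 ≤ x → HasDerivAt g' (g'' x) x)
  (h0 : g 0 = 0) (h0' : g' 0 = 0) (hineq : ∀ x, 0 ≤ x → k ^ 2 * g x ≤ g'' x)
include hg hg' h0 h0' hineq

lemma nonneg_of_sq_mul_le_second_deriv {x : ℝ} (hx : 0 ≤ x) : 0 ≤ g x := by
  have hP : ∀ y, 0 ≤ y → 0 ≤ g' y + k * g y := fun y hy =>
    nonneg_of_deriv_add_mul_nonneg (h := fun z => g' z + k * g z) (-k)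
      (fun z hz => (hg' z hz).add ((hg z hz).const_mul k)) (by simp [h0, h0'])
      (fun z hz => by nlinarith [hineq z hz]) hy
  exact nonneg_of_deriv_add_mul_nonneg k hg h0 hP hx

lemma deriv_nonneg_of_sq_mul_le_second_deriv {x : ℝ} (hx : 0 ≤ x) : 0 ≤ g' x :=
  nonneg_of_hasDerivAt_nonneg hg' h0' (fun y hy =>
    (mul_nonneg (sq_nonneg k) (nonneg_of_sq_mul_le_second_deriv hg hg' h0 h0' hineq hy)).trans
      (hineq y hy)) hx

end SecondOrder

theorem stmt_6_general (k : ℝ) (hk : 0 < k) (f : ℝ → ℝ)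
    (hf : Differentiable ℝ f) (hf' : Differentiable ℝ (deriv f))
    (hf0 : f 0 = 0) (hf'0 : deriv f 0 = 1)
    (hcurv : ∀ r : ℝ, 0 ≤ r → k ^ 2 * f r ≤ deriv (deriv f) r) :
    ∀ r : ℝ, 0 ≤ r → Real.cosh (k * r) ≤ deriv f r := by
  have hk0 : k ≠ 0 := hk.ne'
  have hw : ∀ x, HasDerivAt (fun y => f y - sinh (k * y) / k) (deriv f x - cosh (k * x)) x :=
    fun x => ((hf x).hasDerivAt.sub ((hasDerivAt_const_mul k).sinh.div_const k)).congr_deriv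
      (by field_simp)
  have hw' : ∀ x, HasDerivAt (fun y => deriv f y - cosh (k * y))
      (deriv (deriv f) x - k * sinh (k * x)) x :=
    fun x => ((hf' x).hasDerivAt.sub (hasDerivAt_const_mul k).cosh).congr_deriv (by ring)
  have hineq : ∀ x, 0 ≤ x →
      k ^ 2 * (f x - sinh (k * x) / k) ≤ deriv (deriv f) x - k * sinh (k * x) := by
    intro x hx
    have := hcurv x hx
    field_simp
    linarith
  intro r hr
  have := deriv_nonneg_of_sq_mul_le_second_deriv (fun x _ => hw x) (fun x _ => hw' x)
    (by simp [hf0]) (by simp [hf'0]) hineq hr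
  linarith

/-- Comparison for the warping function: if `f 0 = 0`, `f' 0 = 1`, `f > 0` on `(0,∞)`
and `f'' ≥ k² f` on `[0,∞)`, then `f' r ≥ cosh(kr)` for all `r ≥ 0`. -/
theorem stmt_6 (k : ℝ) (hk : 0 < k) (f : ℝ → ℝ)
    (hf : Differentiable ℝ f) (hf' : Differentiable ℝ (deriv f))
    (hf0 : f 0 = 0) (hf'0 : deriv f 0 = 1)
    (hfpos : ∀ r : ℝ, 0 < r → 0 < f r)
    (hcurv : ∀ r : ℝ, 0 ≤ r → k ^ 2 * f r ≤ deriv (deriv f) r) :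
    ∀ r : ℝ, 0 ≤ r → Real.cosh (k * r) ≤ deriv f r :=
  stmt_6_general k hk f hf hf' hf0 hf'0 hcurv
end

section
/- Let k > 0 and let R > 0 satisfy sinh(kR)² ≥ (4/3)·sinh(k)² and kR ≥ (ln 2)/2. Then arcsin(sinh(k)/sinh(kR)) ≤ 8·sinh(k)·e^{−kR}. -/
/-- Exponential decay of the half viewing angle:
`arcsin (sinh k / sinh kR) ≤ 8 sinh k · e^{−kR}` for `R` past a universal threshold. -/
theorem stmt_11 (k R : ℝ) (hk : 0 < k) (hR : 0 < R)
    (h1 : (4 / 3) * Real.sinh k ^ 2 ≤ Real.sinh (k * R) ^ 2)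
    (h2 : Real.log 2 / 2 ≤ k * R) :
    Real.arcsin (Real.sinh k / Real.sinh (k * R))
      ≤ 8 * Real.sinh k * Real.exp (-(k * R)) := by
  have hs : 0 < Real.sinh k := Real.sinh_pos_iff.2 hk
  have hS : 0 < Real.sinh (k * R) := Real.sinh_pos_iff.2 (by positivity)
  set x := Real.sinh k / Real.sinh (k * R) with hxdef
  have hx0 : 0 < x := div_pos hs hS
  -- x² ≤ 3/4
  have hx2 : x ^ 2 ≤ 3 / 4 := by
    rw [hxdef, div_pow, div_le_iff₀ (by positivity)]
    nlinarith
  have hx1 : x < 1 := by nlinarith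
  -- arcsin x ≤ x / √(1 - x²)
  have harcsin : Real.arcsin x ≤ x / Real.sqrt (1 - x ^ 2) := by
    rw [← Real.tan_arcsin]
    have h0 : 0 < Real.arcsin x := Real.arcsin_pos.2 hx0
    have hlt : Real.arcsin x < Real.pi / 2 := Real.arcsin_lt_pi_div_two.2 hx1
    exact (Real.lt_tan h0 hlt).le
  -- √(1 - x²) ≥ 1/2
  have hsqrt : (1 : ℝ) / 2 ≤ Real.sqrt (1 - x ^ 2) := by
    rw [show (1:ℝ)/2 = Real.sqrt (1/4) by
      rw [show (1:ℝ)/4 = (1/2)^2 by norm_num, Real.sqrt_sq (by norm_num)]]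
    exact Real.sqrt_le_sqrt (by linarith)
  have h2x : x / Real.sqrt (1 - x ^ 2) ≤ 2 * x := by
    rw [div_le_iff₀ (by linarith)]
    nlinarith
  -- 2x ≤ 8 sinh k e^{-kR}
  have key : (1 : ℝ) ≤ 4 * Real.exp (-(k * R)) * Real.sinh (k * R) := by
    have he : Real.exp (-(2 * (k * R))) ≤ (2 : ℝ)⁻¹ := by
      rw [show (2:ℝ)⁻¹ = Real.exp (-Real.log 2) by rw [Real.exp_neg, Real.exp_log two_pos]]
      exact Real.exp_le_exp.2 (by linarith)
    have hsq : Real.exp (-(k * R)) ^ 2 = Real.exp (-(2 * (k * R))) := by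
      rw [sq, ← Real.exp_add]; ring_nf
    have hid : Real.exp (-(k * R)) * Real.exp (k * R) = 1 := by
      rw [← Real.exp_add]; simp
    rw [Real.sinh_eq]
    nlinarith [Real.exp_pos (-(k * R))]
  have hfinal : 2 * x ≤ 8 * Real.sinh k * Real.exp (-(k * R)) := by
    rw [hxdef, ← mul_div_assoc, div_le_iff₀ hS]
    nlinarith [mul_le_mul_of_nonneg_left key hs.le]
  linarith
end

section
/- Let β > 0, k > 0, ε > 0 and C > 0. For every α > 0 there exists R* > 0 such that for every r_0 ≥ R*, the sequence defined by r_{n+1} = r_n + β·r_n^{1+ε}·e^{−k·r_n} satisfies Σ_{n=0}^∞ C·e^{−k·r_n} < α; in particular the series Σ_{n=0}^∞ e^{−k·r_n} converges. -/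
/-!
Since `e^{-k r_n} = (r_{n+1} - r_n) / (β r_n^{1+ε})`, the mean value theorem for `t ↦ t^{-ε}`
bounds each term by `2^{1+ε}/(βε) · (r_n^{-ε} - r_{n+1}^{-ε})` as soon as the steps satisfy
`r_{n+1} ≤ 2 r_n`, which holds once `r_0` is large because `β r^{1+ε} e^{-kr} → 0`. The series
therefore telescopes to at most `2^{1+ε}/(βε) · r_0^{-ε}`, which is small for large `r_0`.
-/

open Real Filter

lemma mul_sub_div_rpow_le_rpow_neg_sub {ε x y : ℝ} (hε : 0 < ε) (hx : 0 < x) (hxy : x ≤ y) :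
    ε * (y - x) / y ^ (1 + ε) ≤ x ^ (-ε) - y ^ (-ε) := by
  rcases hxy.eq_or_lt with rfl | hxy
  · simp
  have hderiv : ∀ t ∈ Set.Ioo x y, HasDerivAt (fun t : ℝ => t ^ (-ε)) (-ε * t ^ (-ε - 1)) t :=
    fun t ht => hasDerivAt_rpow_const (Or.inl (hx.trans ht.1).ne')
  have hcont : ContinuousOn (fun t : ℝ => t ^ (-ε)) (Set.Icc x y) :=
    fun t ht => (continuousAt_rpow_const _ _ (Or.inl (hx.trans_le ht.1).ne')).continuousWithinAt
  obtain ⟨c, hc, hslope⟩ := exists_hasDerivAt_eq_slope _ _ hxy hcont hderiv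
  have hc0 : 0 < c := hx.trans hc.1
  have hdiff : x ^ (-ε) - y ^ (-ε) = ε * (y - x) / c ^ (1 + ε) := by
    rw [eq_div_iff (sub_pos.2 hxy).ne'] at hslope
    rw [show -ε - 1 = -(1 + ε) by ring, rpow_neg hc0.le] at hslope
    field_simp at hslope ⊢
    linarith
  rw [hdiff]
  gcongr
  exact hc.2.le

lemma sub_div_rpow_le_of_le_two_mul {ε x y : ℝ} (hε : 0 < ε) (hx : 0 < x) (hxy : x ≤ y)
    (hy : y ≤ 2 * x) :
    (y - x) / x ^ (1 + ε) ≤ 2 ^ (1 + ε) / ε * (x ^ (-ε) - y ^ (-ε)) := by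
  have hy0 : 0 < y := hx.trans_le hxy
  have hpow : y ^ (1 + ε) ≤ 2 ^ (1 + ε) * x ^ (1 + ε) := by
    rw [← mul_rpow zero_le_two hx.le]
    gcongr
  calc (y - x) / x ^ (1 + ε) = 2 ^ (1 + ε) * (y - x) / (2 ^ (1 + ε) * x ^ (1 + ε)) := by
        rw [mul_div_mul_left _ _ (by positivity)]
    _ ≤ 2 ^ (1 + ε) * (y - x) / y ^ (1 + ε) := by gcongr
    _ = 2 ^ (1 + ε) / ε * (ε * (y - x) / y ^ (1 + ε)) := by field_simp
    _ ≤ 2 ^ (1 + ε) / ε * (x ^ (-ε) - y ^ (-ε)) := by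
        gcongr
        exact mul_sub_div_rpow_le_rpow_neg_sub hε hx hxy

lemma summable_and_tsum_le_of_le_sub_succ {f b : ℕ → ℝ} (hf : ∀ n, 0 ≤ f n) (hb : ∀ n, 0 ≤ b n)
    (h : ∀ n, f n ≤ b n - b (n + 1)) : Summable f ∧ ∑' n, f n ≤ b 0 := by
  have hpartial : ∀ n, ∑ i ∈ Finset.range n, f i ≤ b 0 := fun n =>
    calc ∑ i ∈ Finset.range n, f i ≤ ∑ i ∈ Finset.range n, (b i - b (i + 1)) :=
          Finset.sum_le_sum fun i _ => h i
      _ = b 0 - b n := Finset.sum_range_sub' b n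
      _ ≤ b 0 := sub_le_self _ (hb n)
  exact ⟨summable_of_sum_range_le hf hpartial, Real.tsum_le_of_sum_range_le hf hpartial⟩

section Recursion

variable {β k ε : ℝ}

lemma eventually_mul_rpow_mul_exp_neg_le_one (hk : 0 < k) :
    ∀ᶠ x in atTop, β * x ^ (1 + ε) * exp (-(k * x)) ≤ 1 := by
  have h := (tendsto_rpow_mul_exp_neg_mul_atTop_nhds_zero (1 + ε) k hk).const_mul β
  rw [mul_zero] at h
  filter_upwards [h.eventually_le_const one_pos] with x hx
  rwa [neg_mul, ← mul_assoc] at hx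

lemma exp_neg_mul_le_mul_rpow_neg_sub (hβ : 0 < β) (hε : 0 < ε) {x : ℝ} (hx : 0 < x)
    (hstep : β * x ^ (1 + ε) * exp (-(k * x)) ≤ x) :
    exp (-(k * x)) ≤
      2 ^ (1 + ε) / (β * ε) * (x ^ (-ε) - (x + β * x ^ (1 + ε) * exp (-(k * x))) ^ (-ε)) := by
  set y := x + β * x ^ (1 + ε) * exp (-(k * x))
  have hxy : x ≤ y := le_add_of_nonneg_right (by positivity)
  have hexp : exp (-(k * x)) = (y - x) / x ^ (1 + ε) / β := by
    simp only [y]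
    field_simp
    ring
  rw [hexp, div_le_iff₀ hβ]
  calc (y - x) / x ^ (1 + ε) ≤ 2 ^ (1 + ε) / ε * (x ^ (-ε) - y ^ (-ε)) :=
        sub_div_rpow_le_of_le_two_mul hε hx hxy (by linarith)
    _ = _ := by field_simp

lemma monotone_of_forall_succ_eq (hβ : 0 ≤ β) {r : ℕ → ℝ} (h0 : 0 ≤ r 0)
    (hrec : ∀ n, r (n + 1) = r n + β * r n ^ (1 + ε) * exp (-(k * r n))) : Monotone r := by
  have hstep : ∀ x : ℝ, 0 ≤ x → x ≤ x + β * x ^ (1 + ε) * exp (-(k * x)) :=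
    fun x hx => le_add_of_nonneg_right (by positivity)
  have hnonneg : ∀ n, 0 ≤ r n := by
    intro n
    induction n with
    | zero => exact h0
    | succ n ih => rw [hrec]; exact ih.trans (hstep _ ih)
  exact monotone_nat_of_le_succ fun n => (hrec n) ▸ hstep _ (hnonneg n)

end Recursion

/-- Summability estimate: for every `α > 0` one can choose the initial radius `r 0`
so large that `Σ C e^{−k r_n} < α` along the sequence
`r_{n+1} = r_n + β r_n^{1+ε} e^{−k r_n}`. -/
theorem stmt_14 (β k ε C : ℝ) (hβ : 0 < β) (hk : 0 < k) (hε : 0 < ε) (hC : 0 < C) :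
    ∀ α : ℝ, 0 < α → ∃ Rstar : ℝ, 0 < Rstar ∧
      ∀ r : ℕ → ℝ, Rstar ≤ r 0 →
        (∀ n : ℕ, r (n + 1) = r n + β * r n ^ (1 + ε) * Real.exp (-(k * r n))) →
        Summable (fun n : ℕ => Real.exp (-(k * r n))) ∧
          ∑' n : ℕ, C * Real.exp (-(k * r n)) < α := by
  intro α hα
  set K := 2 ^ (1 + ε) / (β * ε)
  have hsmall : Tendsto (fun x : ℝ => C * K * x ^ (-ε)) atTop (nhds 0) := by
    simpa using (tendsto_rpow_neg_atTop hε).const_mul (C * K)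
  obtain ⟨R, hR⟩ := eventually_atTop.1 ((eventually_mul_rpow_mul_exp_neg_le_one hk).and
    (hsmall.eventually_lt_const hα))
  refine ⟨max 1 R, by positivity, fun r hr0 hrec => ?_⟩
  have hmono := monotone_of_forall_succ_eq hβ.le (by linarith [le_max_left 1 R]) hrec
  have hone : ∀ n, 1 ≤ r n := fun n => (le_max_left 1 R).trans (hr0.trans (hmono n.zero_le))
  have hlarge : ∀ n, R ≤ r n := fun n => (le_max_right 1 R).trans (hr0.trans (hmono n.zero_le))
  have hbound : ∀ n, exp (-(k * r n)) ≤ K * r n ^ (-ε) - K * r (n + 1) ^ (-ε) := by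
    intro n
    rw [← mul_sub, hrec]
    exact exp_neg_mul_le_mul_rpow_neg_sub hβ hε (by linarith [hone n])
      ((hR _ (hlarge n)).1.trans (hone n))
  obtain ⟨hsum, htsum⟩ := summable_and_tsum_le_of_le_sub_succ (fun n => (exp_pos _).le)
    (fun n => by have := hone n; positivity) hbound
  refine ⟨hsum, ?_⟩
  calc ∑' n, C * exp (-(k * r n)) = C * ∑' n, exp (-(k * r n)) := tsum_mul_left
    _ ≤ C * (K * r 0 ^ (-ε)) := by gcongr
    _ < α := by rw [← mul_assoc]; exact (hR _ (hlarge 0)).2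
end
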